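/- Every closed convex cone K ⊆ ℝ^d is Capra-convex, for any choice of source norm. -/

import Mathlib

open Classical in
noncomputable def radProj {d : ℕ} (N : EuclideanSpace ℝ (Fin d) → ℝ)
    (x : EuclideanSpace ℝ (Fin d)) : EuclideanSpace ℝ (Fin d) :=
  if x = 0 then 0 else (N x)⁻¹ • x

noncomputable def capraConj {d : ℕ} (N : EuclideanSpace ℝ (Fin d) → ℝ)
    (f : EuclideanSpace ℝ (Fin d) → EReal) (y : EuclideanSpace ℝ (Fin d)) : EReal :=
  ⨆ x : EuclideanSpace ℝ (Fin d), ((inner ℝ (radProj N x) y : ℝ) : EReal) - f x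

noncomputable def capraBiconj {d : ℕ} (N : EuclideanSpace ℝ (Fin d) → ℝ)
    (f : EuclideanSpace ℝ (Fin d) → EReal) (x : EuclideanSpace ℝ (Fin d)) : EReal :=
  ⨆ y : EuclideanSpace ℝ (Fin d), ((inner ℝ (radProj N x) y : ℝ) : EReal) - capraConj N f y

open Classical in
noncomputable def ind {d : ℕ} (X : Set (EuclideanSpace ℝ (Fin d)))
    (x : EuclideanSpace ℝ (Fin d)) : EReal :=
  if x ∈ X then 0 else ⊤

def IsCapraConvex {d : ℕ} (N : EuclideanSpace ℝ (Fin d) → ℝ)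
    (X : Set (EuclideanSpace ℝ (Fin d))) : Prop :=
  ind X = capraBiconj N (ind X)

def coneHull {d : ℕ} (A : Set (EuclideanSpace ℝ (Fin d))) : Set (EuclideanSpace ℝ (Fin d)) :=
  {y | ∃ a ∈ A, ∃ l : ℝ, 0 < l ∧ y = l • a}


/-! A point of `K` gets biconjugate value `0` by testing `y = 0`. Now let `x ∉ K` with `K` nonempty
(if `K = ∅` every conjugate value is `⊥`). Then `0 ∈ K`, and `ρ x ∉ K` because `ρ` rescales by a
positive factor, so Farkas' lemma gives `w` with `⟪u, w⟫ ≤ 0` on `K` and `⟪ρ x, w⟫ > 0`. Since `ρ`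
maps `K` into `K`, the conjugate of the indicator vanishes at every `t • w` with `t > 0`, so the
biconjugate at `x` is at least `t * ⟪ρ x, w⟫` for all `t > 0`, that is, `⊤`. -/

open scoped RealInnerProductSpace Topology

section

variable {E : Type*}

theorem zero_mem_of_smul_mem [AddCommGroup E] [Module ℝ E] [TopologicalSpace E]
    [ContinuousSMul ℝ E] {K : Set E} (hKc : IsClosed K) (hK : ∀ c : ℝ, 0 < c → ∀ x ∈ K, c • x ∈ K)
    (hne : K.Nonempty) : (0 : E) ∈ K := by
  obtain ⟨x, hx⟩ := hne
  have hlim : Filter.Tendsto (fun c : ℝ => c • x) (𝓝[>] 0) (𝓝 0) := by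
    simpa using
      (tendsto_nhdsWithin_of_tendsto_nhds (Filter.tendsto_id (x := 𝓝 (0 : ℝ)))).smul_const x
  exact hKc.mem_of_tendsto hlim (eventually_nhdsWithin_of_forall fun c hc => hK c hc x hx)

def ConvexCone.ofConvex [AddCommGroup E] [Module ℝ E] {K : Set E} (hKconv : Convex ℝ K)
    (hK : ∀ c : ℝ, 0 < c → ∀ x ∈ K, c • x ∈ K) : ConvexCone ℝ E where
  carrier := K
  smul_mem' c hc x hx := hK c hc x hx
  add_mem' u hu v hv := by
    convert hK 2 two_pos _ (hKconv hu hv (by norm_num : (0 : ℝ) ≤ 1 / 2)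
      (by norm_num : (0 : ℝ) ≤ 1 / 2) (by norm_num)) using 1
    module

theorem exists_inner_pos_of_notMem_cone [NormedAddCommGroup E] [InnerProductSpace ℝ E]
    [CompleteSpace E] {K : Set E} (hKc : IsClosed K) (hKconv : Convex ℝ K)
    (hK : ∀ c : ℝ, 0 < c → ∀ x ∈ K, c • x ∈ K) (hne : K.Nonempty) {z : E} (hz : z ∉ K) :
    ∃ w, (∀ u ∈ K, ⟪u, w⟫ ≤ 0) ∧ 0 < ⟪z, w⟫ := by
  let P : ProperCone ℝ E :=
    ⟨(ConvexCone.ofConvex hKconv hK).toPointedCone (zero_mem_of_smul_mem hKc hK hne), hKc⟩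
  obtain ⟨y, hyK, hzy⟩ := P.hyperplane_separation' hz
  exact ⟨-y, fun u hu => by simpa [inner_neg_right] using hyK u hu,
    by simpa [inner_neg_right] using hzy⟩

theorem pos_of_ne_zero_of_abs_homogeneous_of_subadditive [AddCommGroup E] [Module ℝ E]
    {N : E → ℝ} (hN0 : ∀ x, N x = 0 ↔ x = 0) (hNh : ∀ (a : ℝ) x, N (a • x) = |a| * N x)
    (hNt : ∀ x y, N (x + y) ≤ N x + N y) {x : E} (hx : x ≠ 0) : 0 < N x := by
  have hneg : N (-x) = N x := by simpa using hNh (-1) x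
  have hnonneg : 0 ≤ N x := by
    have := hNt x (-x)
    rw [add_neg_cancel, (hN0 0).2 rfl, hneg] at this
    linarith
  exact hnonneg.lt_of_ne fun h => hx ((hN0 x).1 h.symm)

end

section RadProj

variable {d : ℕ} {N : EuclideanSpace ℝ (Fin d) → ℝ} {K : Set (EuclideanSpace ℝ (Fin d))}
  {x : EuclideanSpace ℝ (Fin d)}

theorem radProj_mem (hpos : ∀ x, x ≠ 0 → 0 < N x) (hK : ∀ c : ℝ, 0 < c → ∀ x ∈ K, c • x ∈ K)
    (h0 : 0 ∈ K) (hx : x ∈ K) : radProj N x ∈ K := by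
  by_cases hx0 : x = 0
  · simpa [radProj, hx0] using h0
  · simpa [radProj, hx0] using hK _ (inv_pos.2 (hpos x hx0)) x hx

theorem mem_of_radProj_mem (hpos : ∀ x, x ≠ 0 → 0 < N x)
    (hK : ∀ c : ℝ, 0 < c → ∀ x ∈ K, c • x ∈ K) (hx0 : x ≠ 0) (hx : radProj N x ∈ K) : x ∈ K := by
  simpa [radProj, hx0, smul_smul, (hpos x hx0).ne'] using hK _ (hpos x hx0) _ hx

end RadProj

section Capra

variable {d : ℕ} {N : EuclideanSpace ℝ (Fin d) → ℝ} {X : Set (EuclideanSpace ℝ (Fin d))}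
  {x y w : EuclideanSpace ℝ (Fin d)}

theorem le_capraConj_ind (hx : x ∈ X) (y : EuclideanSpace ℝ (Fin d)) :
    ((⟪radProj N x, y⟫ : ℝ) : EReal) ≤ capraConj N (ind X) y := by
  calc ((⟪radProj N x, y⟫ : ℝ) : EReal) = ((⟪radProj N x, y⟫ : ℝ) : EReal) - ind X x := by
        simp [ind, hx]
    _ ≤ capraConj N (ind X) y :=
        le_iSup (fun u => ((⟪radProj N u, y⟫ : ℝ) : EReal) - ind X u) x

theorem capraConj_ind_nonpos (hy : ∀ u ∈ X, ⟪radProj N u, y⟫ ≤ 0) :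
    capraConj N (ind X) y ≤ 0 := by
  refine iSup_le fun u => ?_
  by_cases hu : u ∈ X
  · simpa [ind, hu] using hy u hu
  · simp [ind, hu]

theorem capraBiconj_ind_of_mem (hx : x ∈ X) : capraBiconj N (ind X) x = 0 := by
  refine le_antisymm (iSup_le fun y => EReal.sub_nonpos.2 (le_capraConj_ind hx y)) ?_
  have hconj : capraConj N (ind X) 0 ≤ 0 := capraConj_ind_nonpos fun u _ => by simp
  calc (0 : EReal) = ((⟪radProj N x, 0⟫ : ℝ) : EReal) - 0 := by simp
    _ ≤ ((⟪radProj N x, 0⟫ : ℝ) : EReal) - capraConj N (ind X) 0 := EReal.sub_le_sub le_rfl hconj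
    _ ≤ capraBiconj N (ind X) x :=
      le_iSup (fun y => ((⟪radProj N x, y⟫ : ℝ) : EReal) - capraConj N (ind X) y) 0

theorem capraBiconj_ind_eq_top_of_inner_pos (hw : ∀ u ∈ X, ⟪radProj N u, w⟫ ≤ 0)
    (hxw : 0 < ⟪radProj N x, w⟫) : capraBiconj N (ind X) x = ⊤ := by
  refine EReal.eq_top_iff_forall_lt _ |>.2 fun r => ?_
  obtain ⟨t, ht, hrt⟩ := exists_pos_lt_mul hxw r
  have hconj : capraConj N (ind X) (t • w) ≤ 0 := capraConj_ind_nonpos fun u hu => by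
    simpa [real_inner_smul_right] using mul_nonpos_of_nonneg_of_nonpos ht.le (hw u hu)
  calc (r : EReal) < ((⟪radProj N x, t • w⟫ : ℝ) : EReal) - 0 := by
        rw [sub_zero, real_inner_smul_right]; exact_mod_cast hrt
    _ ≤ ((⟪radProj N x, t • w⟫ : ℝ) : EReal) - capraConj N (ind X) (t • w) :=
        EReal.sub_le_sub le_rfl hconj
    _ ≤ capraBiconj N (ind X) x :=
        le_iSup (fun y => ((⟪radProj N x, y⟫ : ℝ) : EReal) - capraConj N (ind X) y) (t • w)

theorem capraBiconj_ind_empty : capraBiconj N (ind ∅) x = ⊤ := by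
  have hconj : ∀ y, capraConj N (ind ∅) y = ⊥ := fun y => by simp [capraConj, ind]
  simp [capraBiconj, hconj]

theorem isCapraConvex_iff : IsCapraConvex N X ↔ ∀ x ∉ X, capraBiconj N (ind X) x = ⊤ := by
  refine ⟨fun h x hx => by simp [← congrFun h x, ind, hx], fun h => funext fun x => ?_⟩
  by_cases hx : x ∈ X
  · simp [ind, hx, capraBiconj_ind_of_mem hx]
  · simp [ind, hx, h x hx]

end Capra

theorem stmt {d : ℕ} (N : EuclideanSpace ℝ (Fin d) → ℝ)
    (hN0 : ∀ x : EuclideanSpace ℝ (Fin d), N x = 0 ↔ x = 0)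
    (hNh : ∀ (a : ℝ) (x : EuclideanSpace ℝ (Fin d)), N (a • x) = |a| * N x)
    (hNt : ∀ x y : EuclideanSpace ℝ (Fin d), N (x + y) ≤ N x + N y)
    (K : Set (EuclideanSpace ℝ (Fin d))) (hKc : IsClosed K) (hKconv : Convex ℝ K)
    (hK : ∀ l : ℝ, 0 < l → ∀ x ∈ K, l • x ∈ K) :
    IsCapraConvex N K := by
  have hpos : ∀ x, x ≠ 0 → 0 < N x :=
    fun x => pos_of_ne_zero_of_abs_homogeneous_of_subadditive hN0 hNh hNt
  refine isCapraConvex_iff.2 fun x hx => ?_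
  rcases K.eq_empty_or_nonempty with rfl | hne
  · exact capraBiconj_ind_empty
  have h0 : 0 ∈ K := zero_mem_of_smul_mem hKc hK hne
  have hx0 : x ≠ 0 := fun h => hx (h ▸ h0)
  obtain ⟨w, hwK, hxw⟩ := exists_inner_pos_of_notMem_cone hKc hKconv hK hne
    (mt (mem_of_radProj_mem hpos hK hx0) hx)
  exact capraBiconj_ind_eq_top_of_inner_pos (fun u hu => hwK _ (radProj_mem hpos hK h0 hu)) hxw
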